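/- Suppose Ĉ_n, R_n : W → ℝ satisfy sup_{w∈W} |Ĉ_n(w) − R_n(w)| / R_n(w) → 0, where R_n(w) > 0 for all w ∈ W. If ŵ_n minimizes Ĉ_n over W, then R_n(ŵ_n)/inf_{w∈W} R_n(w) → 1, provided the infimum is attained. -/
import Mathlib


open Filter

/-- Deterministic asymptotic-optimality skeleton: if
`sup_{w∈W} |Ĉ_n(w) − R_n(w)|/R_n(w) → 0` with `R_n > 0` on `W`, `ŵ_n` minimizes
`Ĉ_n` over `W`, and the infimum of `R_n` over `W` is attained at `wopt n`, then
`R_n(ŵ_n)/inf_{w∈W} R_n(w) → 1`. -/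
theorem asymptotic_optimality_of_uniform_relative_convergence (S : ℕ)
    (W : Set (EuclideanSpace ℝ (Fin S)))
    (C R : ℕ → EuclideanSpace ℝ (Fin S) → ℝ)
    (hRpos : ∀ n, ∀ w ∈ W, 0 < R n w)
    (hunif : ∀ e > (0 : ℝ), ∃ N, ∀ n ≥ N, ∀ w ∈ W, |C n w - R n w| / R n w ≤ e)
    (what wopt : ℕ → EuclideanSpace ℝ (Fin S))
    (hwhatW : ∀ n, what n ∈ W) (hwoptW : ∀ n, wopt n ∈ W)
    (hmin : ∀ n, ∀ w ∈ W, C n (what n) ≤ C n w)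
    (hopt : ∀ n, ∀ w ∈ W, R n (wopt n) ≤ R n w) :
    Tendsto (fun n => R n (what n) / R n (wopt n)) atTop (nhds 1) := by
  rw [Metric.tendsto_atTop]
  intro ε hε
  set e : ℝ := min (ε / 8) (1 / 2) with he
  have he0 : 0 < e := lt_min (by linarith) (by norm_num)
  have he1 : e ≤ 1 / 2 := min_le_right _ _
  have he2 : e ≤ ε / 8 := min_le_left _ _
  obtain ⟨N, hN⟩ := hunif e he0
  refine ⟨N, fun n hn => ?_⟩
  have hRh := hRpos n _ (hwhatW n)
  have hRo := hRpos n _ (hwoptW n)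
  -- bounds: |C - R| ≤ e * R on W
  have hb : ∀ w ∈ W, |C n w - R n w| ≤ e * R n w := by
    intro w hw
    have := hN n hn w hw
    have hp := hRpos n w hw
    calc |C n w - R n w| = |C n w - R n w| / R n w * R n w := by
          field_simp
      _ ≤ e * R n w := by
          apply mul_le_mul_of_nonneg_right this hp.le
  have h1 : (1 - e) * R n (what n) ≤ C n (what n) := by
    have := abs_le.1 (hb _ (hwhatW n))
    linarith [this.1]
  have h2 : C n (wopt n) ≤ (1 + e) * R n (wopt n) := by
    have := abs_le.1 (hb _ (hwoptW n))
    linarith [this.2]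
  have hchain : (1 - e) * R n (what n) ≤ (1 + e) * R n (wopt n) :=
    le_trans h1 (le_trans (hmin n _ (hwoptW n)) h2)
  have hge : 1 ≤ R n (what n) / R n (wopt n) :=
    (one_le_div hRo).2 (hopt n _ (hwhatW n))
  have hle : R n (what n) / R n (wopt n) ≤ (1 + e) / (1 - e) := by
    rw [div_le_div_iff₀ hRo (by linarith : (0:ℝ) < 1 - e)]
    linarith [hchain]
  have hfrac : (1 + e) / (1 - e) ≤ 1 + 4 * e := by
    rw [div_le_iff₀ (by linarith : (0:ℝ) < 1 - e)]
    nlinarith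
  rw [Real.dist_eq, abs_lt]
  constructor <;> [linarith; linarith [hle.trans hfrac]]
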